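/- arXiv:2207.09203 — 3 statements merged into one kernel-verified Lean document; each statement's English description precedes it below -/
import Mathlib

section
/- Every separable inner quasidiagonal C*-algebra is an MF algebra. -/
open scoped Matrix.Norms.L2Operator ComplexOrder
open Matrix Filter TopologicalSpace

noncomputable section

/-- `n × n` complex matrices endowed with the ℓ²-operator norm. -/
abbrev MatC (n : ℕ) : Type := Matrix (Fin n) (Fin n) ℂ

/-- A map into matrices is `*`-linear if it is `ℂ`-linear and star-preserving. -/
def IsStarLinear {A : Type*} [AddCommGroup A] [Module ℂ A] [Star A] {n : ℕ}
    (φ : A → MatC n) : Prop :=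
  IsLinearMap ℂ φ ∧ ∀ a, φ (star a) = star (φ a)

/-- The normalized trace `trₙ` on `n × n` matrices. -/
def trn {n : ℕ} (α : MatC n) : ℂ := Matrix.trace α / (n : ℂ)

/-- The 2-norm `‖α‖_{2,tr} = trₙ(α*α)^{1/2}` induced by the normalized trace. -/
def l2tr {n : ℕ} (α : MatC n) : ℝ := Real.sqrt (trn (star α * α)).re

/-- A C*-algebra `A` is MF: for every finite `F ⊆ A` and `ε > 0` there are `n ≥ 1` and a
`*`-linear map `φ : A → Mₙ` which is `ε`-almost multiplicative and `ε`-almost norm-preserving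
on `F`. -/
def IsMFAlgebra (A : Type*) [NonUnitalCStarAlgebra A] : Prop :=
  ∀ (F : Finset A) (ε : ℝ), 0 < ε → ∃ n : ℕ, 0 < n ∧ ∃ φ : A → MatC n,
    IsStarLinear φ ∧
    (∀ a ∈ F, ∀ a' ∈ F, ‖φ (a * a') - φ a * φ a'‖ < ε) ∧
    (∀ a ∈ F, ‖a‖ - ε < ‖φ a‖)

/-- A trace: a positive linear functional satisfying `τ(ab) = τ(ba)`. -/
def IsTrace {A : Type*} [NonUnitalRing A] [Star A] [Module ℂ A] (τ : A →ₗ[ℂ] ℂ) : Prop :=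
  (∀ a, 0 ≤ τ (star a * a)) ∧ ∀ a b, τ (a * b) = τ (b * a)

/-- An MF trace. -/
def IsMFTrace {A : Type*} [NonUnitalRing A] [Star A] [Module ℂ A] (τ : A →ₗ[ℂ] ℂ) : Prop :=
  ∀ (F : Finset A) (ε : ℝ), 0 < ε → ∃ n : ℕ, 0 < n ∧ ∃ φ : A → MatC n,
    IsStarLinear φ ∧
    (∀ a ∈ F, ∀ a' ∈ F, ‖φ (a * a') - φ a * φ a'‖ < ε) ∧
    (∀ a ∈ F, ‖τ a - trn (φ a)‖ < ε)

/-- An MA (matricially amenable) trace. -/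
def IsMATrace {A : Type*} [NonUnitalRing A] [Star A] [Module ℂ A] (τ : A →ₗ[ℂ] ℂ) : Prop :=
  ∀ (F : Finset A) (ε : ℝ), 0 < ε → ∃ n : ℕ, 0 < n ∧ ∃ φ : A → MatC n,
    IsStarLinear φ ∧
    (∀ a ∈ F, ∀ a' ∈ F, l2tr (φ (a * a') - φ a * φ a') < ε) ∧
    (∀ a ∈ F, ‖τ a - trn (φ a)‖ < ε)

/-- An MF set of operators on a Hilbert space. -/
def IsMFSet {H : Type*} [NormedAddCommGroup H] [InnerProductSpace ℂ H] [CompleteSpace H]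
    (M : Set (H →L[ℂ] H)) : Prop :=
  ∀ (F : Finset (H →L[ℂ] H)), ↑F ⊆ M → ∀ (H₀ : Finset H) (ε : ℝ), 0 < ε →
    ∃ P : H →L[ℂ] H, IsSelfAdjoint P ∧ P * P = P ∧
      (∀ T ∈ F, ‖P * T - T * P‖ < ε) ∧ ∀ x ∈ H₀, ‖x‖ - ε < ‖P x‖

/-- A C*-algebra is inner quasidiagonal: for every finite set and `ε > 0` there are a
representation `π` on a Hilbert space and a finite-rank projection `P` in the double
commutant `π(A)''` almost commuting with and almost norm-preserving the given elements. -/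
def IsInnerQuasidiagonal (A : Type*) [NonUnitalCStarAlgebra A] : Prop :=
  ∀ (F : Finset A) (ε : ℝ), 0 < ε →
    ∃ (H : Type) (_ : NormedAddCommGroup H) (_ : InnerProductSpace ℂ H) (_ : CompleteSpace H)
      (π : A →⋆ₙₐ[ℂ] (H →L[ℂ] H)) (P : H →L[ℂ] H),
      IsSelfAdjoint P ∧ P * P = P ∧ FiniteDimensional ℂ (LinearMap.range (P : H →ₗ[ℂ] H)) ∧
      P ∈ Set.centralizer (Set.centralizer (Set.range π)) ∧
      ∀ x ∈ F, ‖P * π x - π x * P‖ < ε ∧ ‖x‖ - ε < ‖P * π x * P‖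

/-!
Compressing a representation `π` to the finite-dimensional range `K` of the projection `P`
gives, after choosing an orthonormal basis of `K`, a `*`-linear map `a ↦ Pπ(a)P` into matrices.
Its multiplicativity defect is `Pπ(a)(1 - P)π(a')P = Pπ(a)(π(a')P - Pπ(a'))P`, of norm at most
`‖a‖ ‖[P, π(a')]‖`, and it does not decrease `‖Pπ(a)P‖`. Asking for commutators smaller than
`ε / (1 + Σ ‖a‖)` therefore gives the MF approximations.
-/

namespace Submodule

variable {𝕜 E : Type*} [RCLike 𝕜] [NormedAddCommGroup E] [InnerProductSpace 𝕜 E]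
  (K : Submodule 𝕜 E) [CompleteSpace K]

def compression : (E →L[𝕜] E) →ₗ[𝕜] (K →L[𝕜] K) where
  toFun T := K.orthogonalProjectionOnto ∘L T ∘L K.subtypeL
  map_add' _ _ := by simp only [ContinuousLinearMap.add_comp, ContinuousLinearMap.comp_add]
  map_smul' _ _ := by
    simp only [ContinuousLinearMap.smul_comp, ContinuousLinearMap.comp_smul, RingHom.id_apply]

theorem compression_apply (T : E →L[𝕜] E) :
    K.compression T = K.orthogonalProjectionOnto ∘L T ∘L K.subtypeL := rfl

theorem compression_star [CompleteSpace E] (T : E →L[𝕜] E) :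
    K.compression (star T) = star (K.compression T) := by
  simp only [compression_apply, ContinuousLinearMap.star_eq_adjoint,
    ContinuousLinearMap.adjoint_comp, adjoint_subtypeL, adjoint_orthogonalProjectionOnto,
    ContinuousLinearMap.comp_assoc]

theorem norm_compression_le (T : E →L[𝕜] E) : ‖K.compression T‖ ≤ ‖T‖ :=
  calc ‖K.compression T‖ ≤ ‖K.orthogonalProjectionOnto‖ * (‖T‖ * ‖K.subtypeL‖) :=
        (ContinuousLinearMap.opNorm_comp_le _ _).trans
          (by gcongr; exact ContinuousLinearMap.opNorm_comp_le _ _)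
    _ ≤ 1 * (‖T‖ * 1) := by
        gcongr
        exacts [K.orthogonalProjectionOnto_norm_le, K.norm_subtypeL_le]
    _ = ‖T‖ := by ring

/-- Since `K.starProjection` fixes `K`, the defect `(1 - P) T` is `T P - P T` on `K`. -/
theorem compression_mul_sub_mul (S T : E →L[𝕜] E) :
    K.compression (S * T) - K.compression S * K.compression T =
      K.compression (S * (T * K.starProjection - K.starProjection * T)) := by
  ext v
  simp [compression_apply, starProjection_mem_subspace_eq_self]

theorem starProjection_mul_mul_starProjection (T : E →L[𝕜] E) :
    K.starProjection * T * K.starProjection =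
      K.subtypeL ∘L K.compression T ∘L K.orthogonalProjectionOnto := by
  ext v
  rfl

theorem norm_compression_mul_sub_mul_le (S T : E →L[𝕜] E) :
    ‖K.compression (S * T) - K.compression S * K.compression T‖ ≤
      ‖S‖ * ‖K.starProjection * T - T * K.starProjection‖ := by
  rw [compression_mul_sub_mul, norm_sub_rev (K.starProjection * T)]
  exact (K.norm_compression_le _).trans (norm_mul_le _ _)

theorem norm_starProjection_mul_mul_starProjection_le (T : E →L[𝕜] E) :
    ‖K.starProjection * T * K.starProjection‖ ≤ ‖K.compression T‖ :=
  calc ‖K.starProjection * T * K.starProjection‖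
      ≤ ‖K.subtypeL‖ * (‖K.compression T‖ * ‖K.orthogonalProjectionOnto‖) := by
        rw [starProjection_mul_mul_starProjection]
        exact (ContinuousLinearMap.opNorm_comp_le _ _).trans
          (by gcongr; exact ContinuousLinearMap.opNorm_comp_le _ _)
    _ ≤ 1 * (‖K.compression T‖ * 1) := by
        gcongr
        exacts [K.norm_subtypeL_le, K.orthogonalProjectionOnto_norm_le]
    _ = ‖K.compression T‖ := by ring

end Submodule

theorem exists_pos_forall_norm_mul_lt {E : Type*} [SeminormedAddCommGroup E] (F : Finset E)
    {ε : ℝ} (hε : 0 < ε) : ∃ δ, 0 < δ ∧ δ ≤ ε ∧ ∀ a ∈ F, ‖a‖ * δ < ε := by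
  set C := 1 + ∑ a ∈ F, ‖a‖
  have hC : 1 ≤ C := le_add_of_nonneg_right (by positivity)
  have hC₀ : 0 < C := one_pos.trans_le hC
  refine ⟨ε / C, div_pos hε hC₀, div_le_self hε.le hC, fun a ha => ?_⟩
  have ha : ‖a‖ < C := by
    have := Finset.single_le_sum (fun b _ => norm_nonneg b) ha
    linarith
  calc ‖a‖ * (ε / C) < C * (ε / C) := by gcongr
    _ = ε := mul_div_cancel₀ ε hC₀.ne'

theorem isMFAlgebra_of_forall_exists {A : Type*} [NonUnitalCStarAlgebra A]
    (h : ∀ (F : Finset A) (ε : ℝ), 0 < ε → ∃ n : ℕ, ∃ φ : A → MatC n,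
      IsStarLinear φ ∧
      (∀ a ∈ F, ∀ a' ∈ F, ‖φ (a * a') - φ a * φ a'‖ < ε) ∧
      (∀ a ∈ F, ‖a‖ - ε < ‖φ a‖)) :
    IsMFAlgebra A := by
  intro F ε hε
  obtain ⟨n, φ, hφ, hmul, hnorm⟩ := h F ε hε
  rcases n.eq_zero_or_pos with rfl | hn
  · refine ⟨1, one_pos, 0, ⟨⟨fun _ _ => (add_zero 0).symm, fun _ _ => (smul_zero _).symm⟩,
      fun _ => star_zero _ |>.symm⟩, fun _ _ _ _ => by simpa using hε, fun a ha => ?_⟩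
    simpa [Subsingleton.elim (φ a) 0] using hnorm a ha
  · exact ⟨n, hn, φ, hφ, hmul, hnorm⟩

set_option synthInstance.maxHeartbeats 200000 in
theorem exists_isStarLinear_compression {A H : Type*} [NonUnitalNonAssocRing A] [Module ℂ A]
    [Star A] [NormedAddCommGroup H] [InnerProductSpace ℂ H] [CompleteSpace H]
    (π : A →⋆ₙₐ[ℂ] (H →L[ℂ] H)) (K : Submodule ℂ H) [FiniteDimensional ℂ K] :
    ∃ φ : A → MatC (Module.finrank ℂ K), IsStarLinear φ ∧
      (∀ a a', ‖φ (a * a') - φ a * φ a'‖ ≤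
        ‖π a‖ * ‖K.starProjection * π a' - π a' * K.starProjection‖) ∧
      ∀ a, ‖K.starProjection * π a * K.starProjection‖ ≤ ‖φ a‖ := by
  let e : (K →L[ℂ] K) ≃⋆ₐ[ℂ] MatC (Module.finrank ℂ K) :=
    (stdOrthonormalBasis ℂ K).repr.conjStarAlgEquiv.trans Matrix.toEuclideanCLM.symm
  refine ⟨fun a => e (K.compression (π a)), ⟨⟨fun a b => by simp, fun c a => by simp⟩,
    fun a => by simp only [map_star, K.compression_star]⟩, fun a a' => ?_, fun a => ?_⟩
  · rw [← map_mul, ← map_sub, StarAlgEquiv.norm_map, map_mul]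
    exact K.norm_compression_mul_sub_mul_le _ _
  · rw [StarAlgEquiv.norm_map]
    exact K.norm_starProjection_mul_mul_starProjection_le _

theorem innerQuasidiagonal_isMFAlgebra_general (A : Type*) [NonUnitalCStarAlgebra A]
    (h : IsInnerQuasidiagonal A) : IsMFAlgebra A := by
  refine isMFAlgebra_of_forall_exists fun F ε hε => ?_
  obtain ⟨δ, hδ, hδε, hFδ⟩ := exists_pos_forall_norm_mul_lt F hε
  obtain ⟨H, _, _, _, π, P, hPsa, hPidem, hfd, -, hF⟩ := h F δ hδ
  obtain ⟨_, hP⟩ := isStarProjection_iff_eq_starProjection_range.mp ⟨hPidem, hPsa⟩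
  obtain ⟨φ, hφ, hmul, hnorm⟩ :=
    exists_isStarLinear_compression π (LinearMap.range (P : H →ₗ[ℂ] H))
  rw [← hP] at hmul hnorm
  refine ⟨_, φ, hφ, fun a ha a' ha' => ?_, fun a ha => ?_⟩
  · calc ‖φ (a * a') - φ a * φ a'‖ ≤ ‖π a‖ * ‖P * π a' - π a' * P‖ := hmul a a'
      _ ≤ ‖a‖ * δ := by
        gcongr
        exacts [NonUnitalStarAlgHom.norm_apply_le π a, (hF a' ha').1.le]
      _ < ε := hFδ a ha
  · linarith [(hF a ha).2, hnorm a]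

/-- Every separable inner quasidiagonal C*-algebra is an MF algebra. -/
theorem innerQuasidiagonal_isMFAlgebra (A : Type*) [NonUnitalCStarAlgebra A]
    [SeparableSpace A] (h : IsInnerQuasidiagonal A) : IsMFAlgebra A :=
  innerQuasidiagonal_isMFAlgebra_general A h
end
end

section
/- Let A be a nonunital separable C*-algebra, τ a trace on A, and let τ̃ be the trace on the unitization A♯ of A defined by τ̃(a + λ1) = τ(a) + λ for a ∈ A, λ ∈ ℂ. Then τ is an MF trace on A if and only if τ̃ is an MF trace on A♯. -/
open scoped Matrix.Norms.L2Operator ComplexOrder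
open Matrix Filter TopologicalSpace

noncomputable section

/-!
A matrix model `φ : A → Mₙ` of `τ` extends to `A♯` by `a + λ1 ↦ φ(a) + λ1ₙ`: the scalar parts
cancel in the multiplicativity defect, and the normalized trace gains exactly `λ`. Conversely,
restricting a model of `τ̃` along the `*`-homomorphism `A → A♯` gives a model of `τ`.
-/

theorem trn_add {n : ℕ} (α β : MatC n) : trn (α + β) = trn α + trn β := by
  simp only [trn, Matrix.trace_add, add_div]

theorem trn_smul_one {n : ℕ} (hn : n ≠ 0) (c : ℂ) : trn (c • (1 : MatC n)) = c := by
  have hn' : (n : ℂ) ≠ 0 := Nat.cast_ne_zero.mpr hn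
  simp only [trn, Matrix.trace_smul, Matrix.trace_one, Fintype.card_fin, smul_eq_mul]
  field_simp

section Pullback

variable {A B : Type*} [NonUnitalRing A] [Star A] [Module ℂ A]
  [NonUnitalRing B] [Star B] [Module ℂ B]

theorem IsStarLinear.comp_nonUnitalStarAlgHom {n : ℕ} {φ : B → MatC n} (hφ : IsStarLinear φ)
    (f : A →⋆ₙₐ[ℂ] B) : IsStarLinear (φ ∘ f) :=
  ⟨⟨fun x y => by simp only [Function.comp_apply, map_add, hφ.1.map_add],
    fun c x => by simp only [Function.comp_apply, map_smul, hφ.1.map_smul]⟩,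
    fun x => by simp only [Function.comp_apply, map_star, hφ.2]⟩

theorem IsMFTrace.comp_nonUnitalStarAlgHom {σ : B →ₗ[ℂ] ℂ} (hσ : IsMFTrace σ)
    (f : A →⋆ₙₐ[ℂ] B) {τ : A →ₗ[ℂ] ℂ} (hτ : ∀ a, τ a = σ (f a)) : IsMFTrace τ := by
  classical
  intro F ε hε
  obtain ⟨n, hn, φ, hφ, hmul, htr⟩ := hσ (F.image f) ε hε
  refine ⟨n, hn, φ ∘ f, hφ.comp_nonUnitalStarAlgHom f, fun a ha a' ha' => ?_, fun a ha => ?_⟩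
  · simpa only [Function.comp_apply, map_mul] using
      hmul _ (Finset.mem_image_of_mem f ha) _ (Finset.mem_image_of_mem f ha')
  · simpa only [hτ, Function.comp_apply] using htr _ (Finset.mem_image_of_mem f ha)

end Pullback

namespace Unitization

variable {A : Type*} {n : ℕ}

def extendMatC (φ : A → MatC n) (z : Unitization ℂ A) : MatC n := φ z.snd + z.fst • 1

theorem isStarLinear_extendMatC [AddCommGroup A] [Module ℂ A] [Star A] {φ : A → MatC n}
    (hφ : IsStarLinear φ) : IsStarLinear (extendMatC φ) := by
  refine ⟨⟨fun z w => ?_, fun c z => ?_⟩, fun z => ?_⟩ <;>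
    simp only [extendMatC, snd_add, fst_add, snd_smul, fst_smul, snd_star, fst_star,
      hφ.1.map_add, hφ.1.map_smul, hφ.2, add_smul, smul_add, smul_smul, smul_eq_mul,
      star_add, star_smul, star_one]
  abel

theorem extendMatC_mul_sub [NonUnitalRing A] [Module ℂ A] {φ : A → MatC n}
    (hφ : IsLinearMap ℂ φ) (z w : Unitization ℂ A) :
    extendMatC φ (z * w) - extendMatC φ z * extendMatC φ w =
      φ (z.snd * w.snd) - φ z.snd * φ w.snd := by
  simp only [extendMatC, snd_mul, fst_mul, hφ.map_add, hφ.map_smul, add_mul, mul_add, smul_add,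
    smul_mul_assoc, mul_smul_comm, one_mul, mul_one, smul_smul, mul_comm w.fst z.fst]
  abel

theorem trn_extendMatC (hn : n ≠ 0) (φ : A → MatC n) (z : Unitization ℂ A) :
    trn (extendMatC φ z) = trn (φ z.snd) + z.fst := by
  rw [extendMatC, trn_add, trn_smul_one hn]

end Unitization

theorem IsMFTrace.unitization {A : Type*} [NonUnitalRing A] [Star A] [Module ℂ A]
    [IsScalarTower ℂ A A] [SMulCommClass ℂ A A] {τ : A →ₗ[ℂ] ℂ} (hτ : IsMFTrace τ)
    {τt : Unitization ℂ A →ₗ[ℂ] ℂ} (hτt : ∀ z, τt z = τ z.snd + z.fst) : IsMFTrace τt := by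
  classical
  intro F ε hε
  obtain ⟨n, hn, φ, hφ, hmul, htr⟩ := hτ (F.image (·.snd)) ε hε
  refine ⟨n, hn, Unitization.extendMatC φ,
    Unitization.isStarLinear_extendMatC hφ, fun z hz w hw => ?_, fun z hz => ?_⟩
  · rw [Unitization.extendMatC_mul_sub hφ.1]
    exact hmul _ (Finset.mem_image_of_mem _ hz) _ (Finset.mem_image_of_mem _ hw)
  · rw [hτt, Unitization.trn_extendMatC hn.ne', add_sub_add_right_eq_sub]
    exact htr _ (Finset.mem_image_of_mem _ hz)

theorem isMFTrace_unitization_iff_general (A : Type*) [NonUnitalCStarAlgebra A]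
    (τ : A →ₗ[ℂ] ℂ)
    (τt : Unitization ℂ A →ₗ[ℂ] ℂ) (hτt : ∀ z : Unitization ℂ A, τt z = τ z.snd + z.fst) :
    IsMFTrace τ ↔ IsMFTrace τt :=
  ⟨fun h => h.unitization hτt,
    fun h => h.comp_nonUnitalStarAlgHom (Unitization.inrNonUnitalStarAlgHom ℂ A)
      fun a => by simp [hτt]⟩

/-- For a nonunital separable C*-algebra `A` with trace `τ`, and the canonical extension
`τ̃(a + λ1) = τ(a) + λ` to the unitization `A♯ = Unitization ℂ A`, the trace `τ` is MF
if and only if `τ̃` is MF. -/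
theorem isMFTrace_unitization_iff (A : Type*) [NonUnitalCStarAlgebra A] [SeparableSpace A]
    (hnonunital : ¬ ∃ e : A, ∀ a : A, e * a = a ∧ a * e = a)
    (τ : A →ₗ[ℂ] ℂ) (hτ : IsTrace τ)
    (τt : Unitization ℂ A →ₗ[ℂ] ℂ) (hτt : ∀ z : Unitization ℂ A, τt z = τ z.snd + z.fst) :
    IsMFTrace τ ↔ IsMFTrace τt :=
  isMFTrace_unitization_iff_general A τ τt hτt
end
end

section
/- Let A be a separable C*-algebra and Φ an involutory *-antiautomorphism of A, and let A_Φ = {a ∈ A : Φ(a) = a*}. If A_Φ is a real MF algebra, then A is an MF algebra. -/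
open scoped Matrix.Norms.L2Operator ComplexOrder
open Matrix Filter TopologicalSpace

noncomputable section

/-- The real subalgebra `S` of a complex C*-algebra is a real MF algebra: for every finite
`F ⊆ S` and `ε > 0` there are `k ≥ 1` and an `ℝ`-linear star-transpose-preserving map
`ψ : S → Mₖ(ℝ)` (encoded as a map on `A` whose relevant properties hold on `S`) which is
`ε`-almost multiplicative and `ε`-almost norm-preserving on `F`. -/
def IsRealMFOn {A : Type*} [NonUnitalCStarAlgebra A] (S : Set A) : Prop :=
  ∀ (F : Finset A), ↑F ⊆ S → ∀ ε : ℝ, 0 < ε → ∃ k : ℕ, 0 < k ∧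
    ∃ ψ : A → Matrix (Fin k) (Fin k) ℝ,
      (∀ a ∈ S, ∀ b ∈ S, ψ (a + b) = ψ a + ψ b) ∧
      (∀ r : ℝ, ∀ a ∈ S, ψ ((r : ℂ) • a) = r • ψ a) ∧
      (∀ a ∈ S, ψ (star a) = (ψ a)ᵀ) ∧
      (∀ a ∈ F, ∀ b ∈ F, ‖ψ (a * b) - ψ a * ψ b‖ < ε) ∧
      (∀ a ∈ F, ‖a‖ - ε < ‖ψ a‖)

/-! Every `c ∈ A` splits as `c = x + i y` with `x = (c + Φ(c)*)/2` and `y = (c - Φ(c)*)/(2i)` in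
`A_Φ`, and the product of `A` becomes the complex product of such pairs. So a real MF
approximation `ψ` of `A_Φ` complexifies to a `*`-linear, almost multiplicative
`φ(c) = ψ(x) + i ψ(y)`; since `‖ψ(x)‖, ‖ψ(y)‖ ≤ ‖φ(c)‖`, it only satisfies
`‖φ(c)‖ ≳ ‖c‖ / 2`. The power trick removes the factor: `‖(a*a)^(2^m)‖ = ‖a‖^(2^(m+1))`, whereas
almost multiplicativity gives `‖φ((a*a)^(2^m))‖ ≲ ‖φ(a)‖^(2^(m+1))`, so
`‖φ(a)‖ ≳ 2^(-2^(-m-1)) ‖a‖`, which is close to `‖a‖` for large `m`. -/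

open Complex

namespace Matrix

open WithLp

variable {n : Type*} [Fintype n]

lemma norm_toLp_sq_eq_re_add_im (w : n → ℂ) :
    ‖toLp 2 w‖ ^ 2 = ‖toLp 2 (fun i => (w i).re)‖ ^ 2 + ‖toLp 2 (fun i => (w i).im)‖ ^ 2 := by
  rw [EuclideanSpace.norm_sq_eq, EuclideanSpace.norm_sq_eq, EuclideanSpace.norm_sq_eq,
    ← Finset.sum_add_distrib]
  refine Finset.sum_congr rfl fun i _ => ?_
  rw [Complex.sq_norm, Complex.normSq_apply, Real.norm_eq_abs, Real.norm_eq_abs, sq_abs, sq_abs]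
  simp [sq]

lemma norm_toLp_ofReal (u : n → ℝ) : ‖toLp 2 (fun i => (u i : ℂ))‖ = ‖toLp 2 u‖ := by
  rw [← sq_eq_sq₀ (norm_nonneg _) (norm_nonneg _), norm_toLp_sq_eq_re_add_im]
  simp [← Pi.zero_def]

lemma map_ofReal_mulVec_apply (P : Matrix n n ℝ) (x : n → ℂ) (i : n) :
    (P.map ofReal *ᵥ x) i
      = ((P *ᵥ fun j => (x j).re) i : ℂ) + ((P *ᵥ fun j => (x j).im) i : ℂ) * I := by
  simp only [mulVec, dotProduct, map_apply, ofReal_sum, ofReal_mul, Finset.sum_mul,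
    ← Finset.sum_add_distrib]
  refine Finset.sum_congr rfl fun j _ => ?_
  conv_lhs => rw [← re_add_im (x j)]
  ring

lemma map_ofReal_mul (P Q : Matrix n n ℝ) :
    (P * Q).map ofReal = P.map ofReal * Q.map ofReal :=
  Matrix.map_mul (f := ofRealHom)

variable [DecidableEq n]

lemma norm_toLp_mulVec_le {𝕜 : Type*} [RCLike 𝕜] (A : Matrix n n 𝕜) (x : n → 𝕜) :
    ‖toLp 2 (A *ᵥ x)‖ ≤ ‖A‖ * ‖toLp 2 x‖ :=
  A.l2_opNorm_mulVec (toLp 2 x)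

lemma l2_opNorm_le_of_forall {𝕜 : Type*} [RCLike 𝕜] (A : Matrix n n 𝕜) {C : ℝ} (hC : 0 ≤ C)
    (h : ∀ x : n → 𝕜, ‖toLp 2 (A *ᵥ x)‖ ≤ C * ‖toLp 2 x‖) : ‖A‖ ≤ C :=
  ContinuousLinearMap.opNorm_le_bound _ hC fun x => h (ofLp x)

lemma l2_opNorm_map_ofReal_le (P : Matrix n n ℝ) : ‖P.map ofReal‖ ≤ ‖P‖ := by
  refine l2_opNorm_le_of_forall _ (norm_nonneg P) fun x => ?_
  refine (pow_le_pow_iff_left₀ (norm_nonneg _) (by positivity) two_ne_zero).1 ?_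
  calc ‖toLp 2 (P.map ofReal *ᵥ x)‖ ^ 2
      = ‖toLp 2 (P *ᵥ fun j => (x j).re)‖ ^ 2 + ‖toLp 2 (P *ᵥ fun j => (x j).im)‖ ^ 2 := by
        simp [norm_toLp_sq_eq_re_add_im, map_ofReal_mulVec_apply]
    _ ≤ (‖P‖ * ‖toLp 2 fun j => (x j).re‖) ^ 2 + (‖P‖ * ‖toLp 2 fun j => (x j).im‖) ^ 2 := by
        gcongr <;> exact norm_toLp_mulVec_le _ _
    _ = (‖P‖ * ‖toLp 2 x‖) ^ 2 := by
        rw [mul_pow, mul_pow, mul_pow, norm_toLp_sq_eq_re_add_im x]; ring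

lemma l2_opNorm_map_ofReal_add_I_smul_le (P Q : Matrix n n ℝ) :
    ‖P.map ofReal + I • Q.map ofReal‖ ≤ ‖P‖ + ‖Q‖ := by
  refine (norm_add_le _ _).trans ?_
  rw [norm_smul, norm_I, one_mul]
  exact add_le_add (l2_opNorm_map_ofReal_le P) (l2_opNorm_map_ofReal_le Q)

lemma l2_opNorm_le_map_ofReal_add_I_smul_left (P Q : Matrix n n ℝ) :
    ‖P‖ ≤ ‖P.map ofReal + I • Q.map ofReal‖ := by
  set M := P.map ofReal + I • Q.map ofReal
  refine l2_opNorm_le_of_forall _ (norm_nonneg _) fun u => ?_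
  have hre : (fun i => ((M *ᵥ fun j => (u j : ℂ)) i).re) = P *ᵥ u := by
    ext i
    simp [M, mulVec, dotProduct]
  refine (pow_le_pow_iff_left₀ (norm_nonneg _) (by positivity) two_ne_zero).1 ?_
  calc ‖toLp 2 (P *ᵥ u)‖ ^ 2
      ≤ ‖toLp 2 (P *ᵥ u)‖ ^ 2 + ‖toLp 2 (fun i => ((M *ᵥ fun j => (u j : ℂ)) i).im)‖ ^ 2 :=
        le_add_of_nonneg_right (sq_nonneg _)
    _ = ‖toLp 2 (M *ᵥ fun j => (u j : ℂ))‖ ^ 2 := by rw [norm_toLp_sq_eq_re_add_im, hre]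
    _ ≤ (‖M‖ * ‖toLp 2 u‖) ^ 2 := by
        rw [← norm_toLp_ofReal]
        gcongr
        exact norm_toLp_mulVec_le _ _

lemma l2_opNorm_le_map_ofReal_add_I_smul_right (P Q : Matrix n n ℝ) :
    ‖Q‖ ≤ ‖P.map ofReal + I • Q.map ofReal‖ := by
  have h : Q.map ofReal + I • (-P).map ofReal = -I • (P.map ofReal + I • Q.map ofReal) := by
    ext i j
    simp [Complex.ext_iff]
  simpa only [h, norm_smul, norm_neg, norm_I, one_mul] using
    l2_opNorm_le_map_ofReal_add_I_smul_left Q (-P)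

end Matrix

lemma le_pow_of_le_sq_add {u : ℕ → ℝ} {δ η : ℝ} {m : ℕ} (hu : ∀ j, 0 ≤ u j) (hδ : 0 ≤ δ)
    (hδ1 : δ ≤ 1) (hη : η ≤ δ ^ 2 ^ m) (hsucc : ∀ j < m, u (j + 1) ≤ u j ^ 2 + η) :
    u m ≤ (u 0 + m * δ) ^ 2 ^ m := by
  suffices ∀ j ≤ m, u j ≤ (u 0 + j * δ) ^ 2 ^ j from this m le_rfl
  intro j hj
  induction j with
  | zero => simp
  | succ j ih =>
    have hηj : η ≤ δ ^ 2 ^ (j + 1) :=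
      hη.trans (pow_le_pow_of_le_one hδ hδ1 (Nat.pow_le_pow_right two_pos hj))
    have hbase : 0 ≤ u 0 + j * δ := by have := hu 0; positivity
    calc u (j + 1) ≤ u j ^ 2 + η := hsucc j hj
      _ ≤ ((u 0 + j * δ) ^ 2 ^ j) ^ 2 + δ ^ 2 ^ (j + 1) := by
          gcongr
          · exact hu j
          · exact ih (by omega)
      _ = (u 0 + j * δ) ^ 2 ^ (j + 1) + δ ^ 2 ^ (j + 1) := by rw [← pow_mul, pow_succ]
      _ ≤ (u 0 + j * δ + δ) ^ 2 ^ (j + 1) := pow_add_pow_le hbase hδ (by positivity)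
      _ = (u 0 + (j + 1 : ℕ) * δ) ^ 2 ^ (j + 1) := by push_cast; ring

lemma norm_le_of_norm_sub_mul_self_le {M : Type*} [NonUnitalSeminormedRing M] {X : ℕ → M}
    {m : ℕ} {δ η : ℝ} (hδ : 0 ≤ δ) (hδ1 : δ ≤ 1) (hη : η ≤ δ ^ 2 ^ m)
    (hX : ∀ j < m, ‖X (j + 1) - X j * X j‖ ≤ η) :
    ‖X m‖ ≤ (‖X 0‖ + m * δ) ^ 2 ^ m := by
  refine le_pow_of_le_sq_add (u := fun j => ‖X j‖) (fun _ => norm_nonneg _) hδ hδ1 hη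
    fun j hj => ?_
  calc ‖X (j + 1)‖ ≤ ‖X (j + 1) - X j * X j‖ + ‖X j * X j‖ := norm_le_norm_sub_add _ _
    _ ≤ ‖X j‖ ^ 2 + η := by
        rw [sq, add_comm]; exact add_le_add (norm_mul_le _ _) (hX j hj)

lemma IsSelfAdjoint.norm_iterate_mul_self {A : Type*} [NonUnitalNormedRing A] [StarRing A]
    [CStarRing A] {h : A} (hh : IsSelfAdjoint h) (j : ℕ) :
    ‖(fun x => x * x)^[j] h‖ = ‖h‖ ^ 2 ^ j := by
  induction j with
  | zero => simp
  | succ j ih =>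
    have hsa : IsSelfAdjoint ((fun x => x * x)^[j] h) :=
      Function.Iterate.rec IsSelfAdjoint hh (fun x hx => by
        simpa only [hx.star_eq] using IsSelfAdjoint.star_mul_self x) j
    rw [Function.iterate_succ_apply', hsa.norm_mul_self, ih, ← pow_mul, pow_succ]

lemma sub_lt_of_mul_pow_sub_lt {r t ε c R η κ : ℝ} {N : ℕ} (hε : 0 < ε) (hc : 0 < c)
    (ht : 0 ≤ t) (hκ : 0 ≤ κ) (hκε : κ ≤ ε ^ 2 / 2) (hrR : r ≤ R)
    (hN : (1 - ε / (2 * R)) ^ N < c / 2) (hη : η ≤ c * (ε ^ 2) ^ N / 2)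
    (h : c * (r ^ 2) ^ N - η < (t ^ 2 + κ) ^ N) :
    r - ε < t := by
  by_contra! htr
  have hεr : ε ≤ r := by linarith
  have hr : 0 < r := hε.trans_le hεr
  have hbase : t ^ 2 + κ ≤ r ^ 2 * (1 - ε / (2 * R)) := by
    have hRr : 1 - ε / (2 * r) ≤ 1 - ε / (2 * R) := by gcongr
    have : r ^ 2 * (1 - ε / (2 * r)) = r ^ 2 - ε * r / 2 := by field_simp
    nlinarith [mul_le_mul_of_nonneg_left hRr (sq_nonneg r)]
  have hupper : (t ^ 2 + κ) ^ N ≤ (r ^ 2) ^ N * (c / 2) := by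
    calc (t ^ 2 + κ) ^ N ≤ (r ^ 2 * (1 - ε / (2 * R))) ^ N :=
          pow_le_pow_left₀ (by positivity) hbase N
      _ = (r ^ 2) ^ N * (1 - ε / (2 * R)) ^ N := mul_pow _ _ _
      _ ≤ (r ^ 2) ^ N * (c / 2) := by gcongr
  have hηr : η ≤ c * (r ^ 2) ^ N / 2 := hη.trans (by gcongr)
  linarith

lemma sub_lt_norm_of_iterate_mul_self_approx {A M : Type*} [NonUnitalCStarAlgebra A]
    [NonUnitalSeminormedRing M] [StarRing M] [NormedStarGroup M] {φ : A → M}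
    (hφ : ∀ a, φ (star a) = star (φ a)) {a : A} {m : ℕ} {c ε R δ η : ℝ} (hε : 0 < ε) (hc : 0 < c)
    (haR : ‖a‖ ≤ R) (hm : (1 - ε / (2 * R)) ^ 2 ^ m < c / 2) (hδ : 0 ≤ δ) (hδ1 : δ ≤ 1)
    (hmδ : m * δ ≤ ε ^ 2 / 4) (hη : 0 ≤ η) (hηδ : η ≤ δ ^ 2 ^ m) (hηε₂ : η ≤ ε ^ 2 / 4)
    (hηc : η ≤ c * (ε ^ 2) ^ 2 ^ m / 2)
    (hmul₀ : ‖φ (star a * a) - φ (star a) * φ a‖ ≤ η)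
    (hmul : ∀ j < m, ‖φ ((fun x => x * x)^[j] (star a * a) * (fun x => x * x)^[j] (star a * a))
      - φ ((fun x => x * x)^[j] (star a * a)) * φ ((fun x => x * x)^[j] (star a * a))‖ ≤ η)
    (hlow : c * ‖(fun x => x * x)^[m] (star a * a)‖ - η
      < ‖φ ((fun x => x * x)^[m] (star a * a))‖) :
    ‖a‖ - ε < ‖φ a‖ := by
  have hup := norm_le_of_norm_sub_mul_self_le
    (X := fun j => φ ((fun x => x * x)^[j] (star a * a))) hδ hδ1 hηδ fun j hj => by
      simpa only [Function.iterate_succ_apply'] using hmul j hj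
  rw [Function.iterate_zero_apply] at hup
  have hstar : ‖φ (star a * a)‖ ≤ ‖φ a‖ ^ 2 + η := by
    calc ‖φ (star a * a)‖ ≤ ‖φ (star a * a) - φ (star a) * φ a‖ + ‖φ (star a) * φ a‖ :=
          norm_le_norm_sub_add _ _
      _ ≤ η + ‖φ a‖ * ‖φ a‖ := by
          gcongr
          exact (norm_mul_le _ _).trans_eq (by rw [hφ, norm_star])
      _ = ‖φ a‖ ^ 2 + η := by ring
  rw [(IsSelfAdjoint.star_mul_self a).norm_iterate_mul_self, CStarRing.norm_star_mul_self,
    ← sq] at hlow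
  refine sub_lt_of_mul_pow_sub_lt (κ := η + m * δ) hε hc (norm_nonneg _) (by positivity)
    (by linarith) haR hm hηc (hlow.trans_le (hup.trans ?_))
  exact pow_le_pow_left₀ (by positivity) (by linarith) _

lemma exists_pow_two_pow_lt {ρ b : ℝ} (hρ₀ : 0 ≤ ρ) (hρ₁ : ρ < 1) (hb : 0 < b) :
    ∃ m : ℕ, ρ ^ 2 ^ m < b :=
  let ⟨m, hm⟩ := exists_pow_lt_of_lt_one hb hρ₁
  ⟨m, (pow_le_pow_of_le_one hρ₀ hρ₁.le Nat.lt_two_pow_self.le).trans_lt hm⟩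

theorem isMFAlgebra_of_mul_norm_sub_lt {A : Type*} [NonUnitalCStarAlgebra A] {c : ℝ} (hc : 0 < c)
    (H : ∀ (F : Finset A) (ε : ℝ), 0 < ε → ∃ n : ℕ, 0 < n ∧ ∃ φ : A → MatC n,
      IsStarLinear φ ∧ (∀ a ∈ F, ∀ a' ∈ F, ‖φ (a * a') - φ a * φ a'‖ < ε) ∧
      (∀ a ∈ F, c * ‖a‖ - ε < ‖φ a‖)) :
    IsMFAlgebra A := by
  classical
  intro F ε hε
  -- one bound `R` for all the norms on `F` lets a single exponent `2 ^ m` serve every `a ∈ F`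
  set R := ε + ∑ a ∈ F, ‖a‖
  have hFR : ∀ a ∈ F, ‖a‖ ≤ R := fun a ha =>
    (Finset.single_le_sum (fun b _ => norm_nonneg b) ha).trans (le_add_of_nonneg_left hε.le)
  have hεR : ε ≤ R := le_add_of_nonneg_right (Finset.sum_nonneg fun b _ => norm_nonneg b)
  have hR : 0 < R := hε.trans_le hεR
  have hR₁ : 0 ≤ 1 - ε / (2 * R) := by
    rw [sub_nonneg, div_le_one (by linarith)]; linarith
  obtain ⟨m, hm⟩ := exists_pow_two_pow_lt hR₁ (sub_lt_self 1 (by positivity)) (half_pos hc)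
  set δ := min 1 (ε ^ 2 / (4 * (m + 1)))
  have hδ : 0 < δ := by positivity
  have hmδ : m * δ ≤ ε ^ 2 / 4 := by
    calc m * δ ≤ (m + 1) * (ε ^ 2 / (4 * (m + 1))) := by
          gcongr
          · linarith
          · exact min_le_right _ _
      _ = ε ^ 2 / 4 := by field_simp
  set η := min (min ε (ε ^ 2 / 4)) (min (δ ^ 2 ^ m) (c * (ε ^ 2) ^ 2 ^ m / 2))
  have hη : 0 < η := by positivity
  have hηε : η ≤ ε := (min_le_left _ _).trans (min_le_left _ _)
  have hηε₂ : η ≤ ε ^ 2 / 4 := (min_le_left _ _).trans (min_le_right _ _)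
  have hηδ : η ≤ δ ^ 2 ^ m := (min_le_right _ _).trans (min_le_left _ _)
  have hηc : η ≤ c * (ε ^ 2) ^ 2 ^ m / 2 := (min_le_right _ _).trans (min_le_right _ _)
  set G := F.biUnion fun a => insert a (insert (star a)
    ((Finset.range (m + 1)).image fun j => (fun x => x * x)^[j] (star a * a)))
  have hG : ∀ a ∈ F, a ∈ G ∧ star a ∈ G ∧ ∀ j ≤ m, (fun x => x * x)^[j] (star a * a) ∈ G := by
    intro a ha
    simp only [G, Finset.mem_biUnion, Finset.mem_insert, Finset.mem_image, Finset.mem_range]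
    exact ⟨⟨a, ha, .inl rfl⟩, ⟨a, ha, .inr (.inl rfl)⟩,
      fun j hj => ⟨a, ha, .inr (.inr ⟨j, by omega, rfl⟩)⟩⟩
  obtain ⟨n, hn, φ, hφ, hmul, hnorm⟩ := H G η hη
  refine ⟨n, hn, φ, hφ, fun a ha a' ha' => ?_, fun a ha => ?_⟩
  · exact (hmul a (hG a ha).1 a' (hG a' ha').1).trans_le hηε
  obtain ⟨haG, hsG, hiG⟩ := hG a ha
  exact sub_lt_norm_of_iterate_mul_self_approx hφ.2 hε hc (hFR a ha) hm hδ.le (min_le_left _ _)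
    hmδ hη.le hηδ hηε₂ hηc (hmul _ hsG _ haG).le
    (fun j hj => (hmul _ (hiG j hj.le) _ (hiG j hj.le)).le) (hnorm _ (hiG m le_rfl))

section AntiAutomorphism

variable {A : Type*} [NonUnitalCStarAlgebra A] (Φ : A →ₗ[ℂ] A)

def rePart (c : A) : A := (2⁻¹ : ℂ) • (c + star (Φ c))

def imPart (c : A) : A := (-(2⁻¹ * I) : ℂ) • (c - star (Φ c))

lemma rePart_add_I_smul_imPart (c : A) : rePart Φ c + I • imPart Φ c = c := by
  simp only [rePart, imPart, smul_smul]
  match_scalars <;> norm_num [Complex.ext_iff]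

lemma rePart_add (c c' : A) : rePart Φ (c + c') = rePart Φ c + rePart Φ c' := by
  simp only [rePart, map_add, star_add]; module

lemma imPart_add (c c' : A) : imPart Φ (c + c') = imPart Φ c + imPart Φ c' := by
  simp only [imPart, map_add, star_add]; module

lemma rePart_real_smul (r : ℝ) (c : A) : rePart Φ ((r : ℂ) • c) = (r : ℂ) • rePart Φ c := by
  simp only [rePart, map_smul, star_smul, Complex.star_def, conj_ofReal]; module

lemma imPart_real_smul (r : ℝ) (c : A) : imPart Φ ((r : ℂ) • c) = (r : ℂ) • imPart Φ c := by
  simp only [imPart, map_smul, star_smul, Complex.star_def, conj_ofReal]; module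

lemma rePart_I_smul (c : A) : rePart Φ (I • c) = -imPart Φ c := by
  simp only [rePart, imPart, map_smul, star_smul, Complex.star_def, conj_I]
  match_scalars <;> norm_num [Complex.ext_iff]

lemma imPart_I_smul (c : A) : imPart Φ (I • c) = rePart Φ c := by
  simp only [rePart, imPart, map_smul, star_smul, Complex.star_def, conj_I]
  match_scalars <;> norm_num [Complex.ext_iff]

lemma rePart_add_I_smul {x y : A} (hx : Φ x = star x) (hy : Φ y = star y) :
    rePart Φ (x + I • y) = x := by
  simp only [rePart, map_add, map_smul, hx, hy, star_add, star_smul, star_star, Complex.star_def,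
    conj_I]
  match_scalars <;> norm_num [Complex.ext_iff]

lemma imPart_add_I_smul {x y : A} (hx : Φ x = star x) (hy : Φ y = star y) :
    imPart Φ (x + I • y) = y := by
  simp only [imPart, map_add, map_smul, hx, hy, star_add, star_smul, star_star, Complex.star_def,
    conj_I]
  match_scalars <;> norm_num [Complex.ext_iff]

lemma mul_eq_rePart_mul_add_I_smul (c c' : A) :
    c * c' = (rePart Φ c * rePart Φ c' - imPart Φ c * imPart Φ c')
      + I • (rePart Φ c * imPart Φ c' + imPart Φ c * rePart Φ c') := by
  conv_lhs => rw [← rePart_add_I_smul_imPart Φ c, ← rePart_add_I_smul_imPart Φ c']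
  simp only [mul_add, add_mul, smul_mul_assoc, mul_smul_comm]
  match_scalars <;> norm_num [Complex.ext_iff]

lemma map_mul_eq_star (hmul : ∀ a b : A, Φ (a * b) = Φ b * Φ a) {x y : A}
    (hx : Φ x = star x) (hy : Φ y = star y) :
    Φ (x * y) = star (x * y) := by
  rw [hmul, hx, hy, star_mul]

variable {Φ} (hstar : ∀ a : A, Φ (star a) = star (Φ a))
include hstar

lemma rePart_star (c : A) : rePart Φ (star c) = star (rePart Φ c) := by
  simp only [rePart, hstar, star_smul, star_add, star_star, Complex.star_def, map_inv₀, map_ofNat]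

lemma imPart_star (c : A) : imPart Φ (star c) = -star (imPart Φ c) := by
  simp only [imPart, hstar, star_smul, star_sub, star_star, Complex.star_def, map_neg, map_mul,
    map_inv₀, map_ofNat, conj_I]
  module

variable (hinv : ∀ a : A, Φ (Φ a) = a)
include hinv

lemma map_rePart (c : A) : Φ (rePart Φ c) = star (rePart Φ c) := by
  simp only [rePart, map_smul, map_add, hstar, hinv, star_smul, star_add, star_star,
    Complex.star_def, map_inv₀, map_ofNat]
  module

lemma map_imPart (c : A) : Φ (imPart Φ c) = star (imPart Φ c) := by
  simp only [imPart, map_smul, map_sub, hstar, hinv, star_smul, star_sub, star_star,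
    Complex.star_def, map_neg, map_mul, map_inv₀, map_ofNat, conj_I]
  module

variable (hmul : ∀ a b : A, Φ (a * b) = Φ b * Φ a)
include hmul

lemma map_rePart_mul_sub (c c' : A) :
    Φ (rePart Φ c * rePart Φ c' - imPart Φ c * imPart Φ c')
      = star (rePart Φ c * rePart Φ c' - imPart Φ c * imPart Φ c') := by
  rw [map_sub, map_mul_eq_star Φ hmul (map_rePart hstar hinv c) (map_rePart hstar hinv c'),
    map_mul_eq_star Φ hmul (map_imPart hstar hinv c) (map_imPart hstar hinv c'), star_sub]

lemma map_rePart_mul_add (c c' : A) :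
    Φ (rePart Φ c * imPart Φ c' + imPart Φ c * rePart Φ c')
      = star (rePart Φ c * imPart Φ c' + imPart Φ c * rePart Φ c') := by
  rw [map_add, map_mul_eq_star Φ hmul (map_rePart hstar hinv c) (map_imPart hstar hinv c'),
    map_mul_eq_star Φ hmul (map_imPart hstar hinv c) (map_rePart hstar hinv c'), star_add]

lemma rePart_mul (c c' : A) :
    rePart Φ (c * c') = rePart Φ c * rePart Φ c' - imPart Φ c * imPart Φ c' := by
  rw [mul_eq_rePart_mul_add_I_smul Φ c c', rePart_add_I_smul Φ
    (map_rePart_mul_sub hstar hinv hmul c c') (map_rePart_mul_add hstar hinv hmul c c')]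

lemma imPart_mul (c c' : A) :
    imPart Φ (c * c') = rePart Φ c * imPart Φ c' + imPart Φ c * rePart Φ c' := by
  rw [mul_eq_rePart_mul_add_I_smul Φ c c', imPart_add_I_smul Φ
    (map_rePart_mul_sub hstar hinv hmul c c') (map_rePart_mul_add hstar hinv hmul c c')]

end AntiAutomorphism

section Complexify

variable {A : Type*} [NonUnitalCStarAlgebra A] {k : ℕ}

structure IsRealStarLinearOn (S : Set A) (ψ : A → Matrix (Fin k) (Fin k) ℝ) : Prop where
  map_add : ∀ a ∈ S, ∀ b ∈ S, ψ (a + b) = ψ a + ψ b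
  map_real_smul : ∀ (r : ℝ), ∀ a ∈ S, ψ ((r : ℂ) • a) = r • ψ a
  map_star : ∀ a ∈ S, ψ (star a) = (ψ a)ᵀ

lemma IsRealStarLinearOn.map_neg {S : Set A} {ψ : A → Matrix (Fin k) (Fin k) ℝ}
    (hψ : IsRealStarLinearOn S ψ) {a : A} (ha : a ∈ S) : ψ (-a) = -ψ a := by
  simpa using hψ.map_real_smul (-1) a ha

variable (Φ : A →ₗ[ℂ] A)

def complexify (ψ : A → Matrix (Fin k) (Fin k) ℝ) (c : A) : MatC k :=
  (ψ (rePart Φ c)).map ofReal + I • (ψ (imPart Φ c)).map ofReal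

lemma lt_norm_complexify {ψ : A → Matrix (Fin k) (Fin k) ℝ} {F : Set A} {η : ℝ}
    (hψ : ∀ a ∈ F, ‖a‖ - η < ‖ψ a‖) {c : A} (hre : rePart Φ c ∈ F) (him : imPart Φ c ∈ F) :
    1 / 2 * ‖c‖ - η < ‖complexify Φ ψ c‖ := by
  have hc : ‖c‖ ≤ ‖rePart Φ c‖ + ‖imPart Φ c‖ := by
    conv_lhs => rw [← rePart_add_I_smul_imPart Φ c]
    exact (norm_add_le _ _).trans_eq (by rw [norm_smul, norm_I, one_mul])
  have h1 := (hψ _ hre).trans_le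
    (Matrix.l2_opNorm_le_map_ofReal_add_I_smul_left _ (ψ (imPart Φ c)))
  have h2 := (hψ _ him).trans_le
    (Matrix.l2_opNorm_le_map_ofReal_add_I_smul_right (ψ (rePart Φ c)) _)
  rw [complexify]
  linarith

variable {Φ} (hstar : ∀ a : A, Φ (star a) = star (Φ a)) (hinv : ∀ a : A, Φ (Φ a) = a)
  {ψ : A → Matrix (Fin k) (Fin k) ℝ} (hψ : IsRealStarLinearOn {a | Φ a = star a} ψ)
include hstar hinv hψ

lemma complexify_add (c c' : A) :
    complexify Φ ψ (c + c') = complexify Φ ψ c + complexify Φ ψ c' := by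
  rw [complexify, rePart_add, imPart_add,
    hψ.map_add _ (map_rePart hstar hinv c) _ (map_rePart hstar hinv c'),
    hψ.map_add _ (map_imPart hstar hinv c) _ (map_imPart hstar hinv c')]
  ext i j
  simp only [Matrix.add_apply, map_apply, ofReal_add, Matrix.smul_apply, smul_eq_mul, complexify]
  ring

lemma complexify_real_smul (r : ℝ) (c : A) :
    complexify Φ ψ ((r : ℂ) • c) = (r : ℂ) • complexify Φ ψ c := by
  rw [complexify, rePart_real_smul, imPart_real_smul,
    hψ.map_real_smul _ _ (map_rePart hstar hinv c), hψ.map_real_smul _ _ (map_imPart hstar hinv c)]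
  ext i j
  simp only [Matrix.add_apply, map_apply, Matrix.smul_apply, smul_eq_mul, ofReal_mul, complexify]
  ring

lemma complexify_I_smul (c : A) : complexify Φ ψ (I • c) = I • complexify Φ ψ c := by
  rw [complexify, rePart_I_smul, imPart_I_smul, hψ.map_neg (map_imPart hstar hinv c)]
  ext i j
  simp only [Matrix.add_apply, map_apply, Matrix.neg_apply, ofReal_neg, Matrix.smul_apply,
    smul_eq_mul, complexify]
  linear_combination -(ψ (imPart Φ c) i j : ℂ) * I_sq

lemma complexify_smul (z : ℂ) (c : A) : complexify Φ ψ (z • c) = z • complexify Φ ψ c := by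
  have hz : z • c = (z.re : ℂ) • c + (z.im : ℂ) • (I • c) := by
    rw [smul_smul, ← add_smul, re_add_im]
  rw [hz, complexify_add hstar hinv hψ, complexify_real_smul hstar hinv hψ,
    complexify_real_smul hstar hinv hψ, complexify_I_smul hstar hinv hψ, smul_smul, ← add_smul,
    re_add_im]

lemma complexify_star (c : A) : complexify Φ ψ (star c) = star (complexify Φ ψ c) := by
  have him : Φ (star (imPart Φ c)) = star (star (imPart Φ c)) := by
    rw [hstar, map_imPart hstar hinv c]
  rw [complexify, rePart_star hstar, imPart_star hstar, hψ.map_star _ (map_rePart hstar hinv c),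
    hψ.map_neg him, hψ.map_star _ (map_imPart hstar hinv c)]
  ext i j
  simp [complexify]

lemma isStarLinear_complexify : IsStarLinear (complexify Φ ψ) :=
  ⟨⟨complexify_add hstar hinv hψ, complexify_smul hstar hinv hψ⟩, complexify_star hstar hinv hψ⟩

variable (hmul : ∀ a b : A, Φ (a * b) = Φ b * Φ a)
include hmul

lemma norm_complexify_mul_sub_lt {F : Set A} {η : ℝ}
    (hF : ∀ a ∈ F, ∀ b ∈ F, ‖ψ (a * b) - ψ a * ψ b‖ < η) {c c' : A}
    (hc : rePart Φ c ∈ F ∧ imPart Φ c ∈ F) (hc' : rePart Φ c' ∈ F ∧ imPart Φ c' ∈ F) :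
    ‖complexify Φ ψ (c * c') - complexify Φ ψ c * complexify Φ ψ c'‖ < 4 * η := by
  obtain ⟨hx, hy⟩ := hc
  obtain ⟨hx', hy'⟩ := hc'
  have hS := map_rePart hstar hinv
  have hT := map_imPart hstar hinv
  have hyy' : Φ (-(imPart Φ c * imPart Φ c')) = star (-(imPart Φ c * imPart Φ c')) := by
    rw [map_neg, map_mul_eq_star Φ hmul (hT c) (hT c'), star_neg]
  have key : complexify Φ ψ (c * c') - complexify Φ ψ c * complexify Φ ψ c'
      = (ψ (rePart Φ c * rePart Φ c') - ψ (rePart Φ c) * ψ (rePart Φ c')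
          - (ψ (imPart Φ c * imPart Φ c') - ψ (imPart Φ c) * ψ (imPart Φ c'))).map ofReal
        + I • (ψ (rePart Φ c * imPart Φ c') - ψ (rePart Φ c) * ψ (imPart Φ c')
          + (ψ (imPart Φ c * rePart Φ c') - ψ (imPart Φ c) * ψ (rePart Φ c'))).map ofReal := by
    rw [complexify, rePart_mul hstar hinv hmul, imPart_mul hstar hinv hmul,
      sub_eq_add_neg (rePart Φ c * rePart Φ c'),
      hψ.map_add _ (map_mul_eq_star Φ hmul (hS c) (hS c')) _ hyy',
      hψ.map_neg (map_mul_eq_star Φ hmul (hT c) (hT c')),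
      hψ.map_add _ (map_mul_eq_star Φ hmul (hS c) (hT c')) _
        (map_mul_eq_star Φ hmul (hT c) (hS c')),
      complexify, complexify]
    simp only [Matrix.map_add _ ofReal_add, Matrix.map_sub _ ofReal_sub,
      Matrix.map_neg _ ofReal_neg, Matrix.map_ofReal_mul, mul_add, add_mul, smul_mul_assoc, mul_smul_comm, smul_smul, I_mul_I,
      neg_one_smul, smul_add, smul_sub]
    abel
  rw [key]
  refine (Matrix.l2_opNorm_map_ofReal_add_I_smul_le _ _).trans_lt ?_
  linarith [norm_sub_le (ψ (rePart Φ c * rePart Φ c') - ψ (rePart Φ c) * ψ (rePart Φ c'))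
      (ψ (imPart Φ c * imPart Φ c') - ψ (imPart Φ c) * ψ (imPart Φ c')),
    norm_add_le (ψ (rePart Φ c * imPart Φ c') - ψ (rePart Φ c) * ψ (imPart Φ c'))
      (ψ (imPart Φ c * rePart Φ c') - ψ (imPart Φ c) * ψ (rePart Φ c')),
    hF _ hx _ hx', hF _ hy _ hy', hF _ hx _ hy', hF _ hy _ hx']

end Complexify

theorem isMFAlgebra_of_isRealMFOn_general (A : Type*) [NonUnitalCStarAlgebra A]
    (Φ : A →ₗ[ℂ] A) (hmul : ∀ a b : A, Φ (a * b) = Φ b * Φ a)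
    (hstar : ∀ a : A, Φ (star a) = star (Φ a)) (hinv : ∀ a : A, Φ (Φ a) = a)
    (h : IsRealMFOn {a : A | Φ a = star a}) :
    IsMFAlgebra A := by
  classical
  refine isMFAlgebra_of_mul_norm_sub_lt one_half_pos fun G ε hε => ?_
  set F := G.image (rePart Φ) ∪ G.image (imPart Φ)
  have hFS : ↑F ⊆ {a : A | Φ a = star a} := by
    intro a ha
    simp only [F, Finset.coe_union, Finset.coe_image, Set.mem_union, Set.mem_image] at ha
    rcases ha with ⟨c, -, rfl⟩ | ⟨c, -, rfl⟩
    exacts [map_rePart hstar hinv c, map_imPart hstar hinv c]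
  have hGF : ∀ c ∈ G, rePart Φ c ∈ F ∧ imPart Φ c ∈ F := fun c hc =>
    ⟨Finset.mem_union_left _ (Finset.mem_image_of_mem _ hc),
      Finset.mem_union_right _ (Finset.mem_image_of_mem _ hc)⟩
  obtain ⟨k, hk, ψ, hadd, hsmul, hψstar, hψmul, hψnorm⟩ := h F hFS (ε / 4) (by positivity)
  have hψ : IsRealStarLinearOn {a | Φ a = star a} ψ := ⟨hadd, hsmul, hψstar⟩
  refine ⟨k, hk, complexify Φ ψ, isStarLinear_complexify hstar hinv hψ,
    fun c hc c' hc' => ?_, fun c hc => ?_⟩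
  · linarith [norm_complexify_mul_sub_lt hstar hinv hψ hmul hψmul (hGF c hc) (hGF c' hc')]
  · linarith [lt_norm_complexify Φ hψnorm (hGF c hc).1 (hGF c hc).2]

/-- If `Φ` is an involutory `*`-antiautomorphism of a separable C*-algebra `A` and the real
C*-algebra `A_Φ = {a : Φ(a) = a*}` is a real MF algebra, then `A` is an MF algebra. -/
theorem isMFAlgebra_of_isRealMFOn (A : Type*) [NonUnitalCStarAlgebra A] [SeparableSpace A]
    (Φ : A →ₗ[ℂ] A) (hmul : ∀ a b : A, Φ (a * b) = Φ b * Φ a)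
    (hstar : ∀ a : A, Φ (star a) = star (Φ a)) (hinv : ∀ a : A, Φ (Φ a) = a)
    (h : IsRealMFOn {a : A | Φ a = star a}) :
    IsMFAlgebra A :=
  isMFAlgebra_of_isRealMFOn_general A Φ hmul hstar hinv h
end
end
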